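/- Fix 𝗑 ∈ ℝ, set x_τ := −τ + (π^{1/4}/√2)·𝗑·τ^{1/2} and Φ_τ(ξ) := −(τ/3)ξ³ + x_τ·ξ − Q(ξ). There exists δ ∈ (0, 1) such that for every δ₁ ∈ (0, δ) there is τ₀ > 0 with: for all τ ≥ τ₀ and all z ∈ ℂ with 1 − δ ≤ |z| ≤ 1 − δ₁, Re Φ_τ(u₀(z)) ≤ 0.4734·τ, and Re Φ_τ(u_k(z)) ≤ −1.9366·|k|^{3/2}·τ for every integer k ≠ 0. -/

import Mathlib

open MeasureTheory Filter Topology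

noncomputable section

/-- θ_k(z) = −2·Arg z + 4πk. -/
def thetaK (z : ℂ) (k : ℤ) : ℝ := -(2 * Complex.arg z) + 4 * Real.pi * (k : ℝ)

/-- The Bethe roots u_k(z) = −(−2·log|z| + i·θ_k(z))^{1/2} (principal branch). -/
def uK (z : ℂ) (k : ℤ) : ℂ :=
  -((((-2 * Real.log (‖z‖) : ℝ) : ℂ) + Complex.I * ((thetaK z k : ℝ) : ℂ)) ^ ((1 : ℂ) / 2))

/-- Q(ξ) = −(1/π) ∫ℝ log(1 − e^{−ξ²/2} e^{−t²/2})/(i·t − ξ) dt. -/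
def Qf (ξ : ℂ) : ℂ :=
  -(1 / (Real.pi : ℂ)) *
    ∫ t : ℝ, Complex.log (1 - Complex.exp (-ξ ^ 2 / 2) * Complex.exp (-((t : ℂ) ^ 2) / 2)) /
      (Complex.I * (t : ℂ) - ξ)

/-- Φ(ξ) = −(τ/3)ξ³ + x·ξ − Q(ξ). -/
def PhiF (τ x : ℝ) (ξ : ℂ) : ℂ := -((τ : ℂ) / 3) * ξ ^ 3 + (x : ℂ) * ξ - Qf ξ

/-- The discrete kernel K_z. -/
def Kz (z : ℂ) (τ γ x : ℝ) (ξ₁ ξ₂ : ℂ) : ℂ :=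
  ∑' k : ℤ,
    Complex.exp (PhiF τ x ξ₁ + PhiF τ x (uK z k) + ((γ : ℂ) / 2) * (ξ₁ ^ 2 - (uK z k) ^ 2)) /
      (ξ₁ * uK z k * (ξ₁ + uK z k) * (uK z k + ξ₂))

/-- N-th term of the Fredholm series of K_z. -/
def fredTermK (z : ℂ) (τ γ x : ℝ) (N : ℕ) : ℂ :=
  ∑' ℓ : Fin N → ℤ,
    Matrix.det (Matrix.of (fun i j : Fin N => Kz z τ γ x (uK z (ℓ i)) (uK z (ℓ j))))

/-- The Fredholm determinant det(𝕀 − K_z). -/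
def fredDetK (z : ℂ) (τ γ x : ℝ) : ℂ :=
  1 + ∑' N : ℕ, ((-1 : ℂ) ^ (N + 1) / (Nat.factorial (N + 1) : ℂ)) * fredTermK z τ γ x (N + 1)

/-- Polylogarithm Li_s(w) = Σ_{k≥1} w^k/k^s. -/
def Li (s : ℝ) (w : ℂ) : ℂ := ∑' k : ℕ, w ^ (k + 1) / ((((k : ℝ) + 1) ^ s : ℝ) : ℂ)

def A1 (z : ℂ) : ℂ := -Li (3 / 2) z / (Real.sqrt (2 * Real.pi) : ℂ)

def A2 (z : ℂ) : ℂ := -Li (5 / 2) z / (Real.sqrt (2 * Real.pi) : ℂ)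

def Bf (z : ℂ) : ℂ :=
  (1 / (4 * (Real.pi : ℂ))) * ∫ t in (0 : ℝ)..1, (Li (1 / 2) ((t : ℂ) * z)) ^ 2 / (t : ℂ)

/-- The point z = R·e^{iθ}. -/
def circlePt (R θ : ℝ) : ℂ := (R : ℂ) * Complex.exp (Complex.I * (θ : ℂ))

/-- The limiting one-point distribution F(x; τ, γ) for step initial condition. -/
def Fstep (R τ γ x : ℝ) : ℂ :=
  (1 / (2 * (Real.pi : ℂ))) *
    ∫ θ in (0 : ℝ)..(2 * Real.pi),
      Complex.exp ((x : ℂ) * A1 (circlePt R θ) + (τ : ℂ) * A2 (circlePt R θ) +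
          2 * Bf (circlePt R θ)) * fredDetK (circlePt R θ) τ γ x

/-- x_τ = −τ + (π^{1/4}/√2)·𝗑·τ^{1/2}. -/
def xTau (x τ : ℝ) : ℝ := -τ + (Real.pi ^ ((1 : ℝ) / 4) / Real.sqrt 2) * x * Real.sqrt τ

/-- The trace Tr K_z = Σ_{k∈ℤ} K_z(u_k, u_k). -/
def trK (z : ℂ) (τ γ x : ℝ) : ℂ := ∑' k : ℤ, Kz z τ γ x (uK z k) (uK z k)

/-!
Write `u_k = -(p + i q)` with `p ≥ 0`, so that `p² - q² = -2 log ‖z‖ ∈ [2δ₁, 10⁻⁶]` and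
`2|pq| = |θ_k| ∈ [4π|k| - 2π, 4π|k| + 2π]`. Then
`Re Φ_τ(u_k) = τ p (3 + p² - 3q²)/3 + O(√τ p) - Re Q(u_k)`, and `Q` is bounded uniformly on the annulus:
`‖e^{-u_k²/2}‖ = ‖z‖ ≤ 1 - δ₁` keeps the logarithm away from its branch point and `Re u_k ≤ -√δ₁`
keeps the denominator `i t - u_k` away from zero. The cubic term is at most `0.4715` for `k = 0`
(essentially `max_{P ≤ 2} P (3 - 2P)² = 2`, giving `√2/3`), and at most
`-(1.9366 |k| + 0.0019) √|k|` for `k ≠ 0`, because `p² ≥ |pq| ≥ π (2|k| - 1)`. The terms of order `√τ`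
are absorbed into the margin `0.0019 τ` once `τ` is large.
-/

section

open Complex

lemma norm_log_one_sub_le {w : ℂ} {δ : ℝ} (hδ : 0 < δ) (hw : ‖w‖ ≤ 1 - δ) :
    ‖log (1 - w)‖ ≤ ‖w‖ / δ := by
  have hw1 : ‖-w‖ < 1 := by rw [norm_neg]; linarith
  have hinv : (1 - ‖w‖)⁻¹ ≤ δ⁻¹ := inv_anti₀ hδ (by linarith)
  calc ‖log (1 - w)‖ = ‖log (1 + -w)‖ := by rw [sub_eq_add_neg]
    _ ≤ ‖w‖ ^ 2 * (1 - ‖w‖)⁻¹ / 2 + ‖w‖ := by simpa using norm_log_one_add_le hw1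
    _ ≤ ‖w‖ * (1 - δ) * δ⁻¹ / 2 + ‖w‖ := by
      have hw0 := norm_nonneg w
      have h1 : ‖w‖ ^ 2 * (1 - ‖w‖)⁻¹ ≤ ‖w‖ * (1 - δ) * δ⁻¹ :=
        mul_le_mul (by nlinarith) hinv (inv_nonneg.mpr (by linarith)) (by nlinarith)
      linarith
    _ ≤ ‖w‖ / δ := by
      have hgap : ‖w‖ / δ - (‖w‖ * (1 - δ) * δ⁻¹ / 2 + ‖w‖) = ‖w‖ * (1 - δ) / (2 * δ) := by
        field_simp
        ring
      have : 0 ≤ ‖w‖ * (1 - δ) / (2 * δ) := by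
        have := (norm_nonneg w).trans hw
        positivity
      linarith

lemma norm_exp_neg_sq_div_two (t : ℝ) :
    ‖exp (-(t : ℂ) ^ 2 / 2)‖ = Real.exp (-(1 / 2) * t ^ 2) := by
  rw [norm_exp]
  congr 1
  simp [sq]
  ring

lemma norm_Qf_integrand_le {ξ : ℂ} {δ ε : ℝ} (hδ : 0 < δ) (hε : 0 < ε) (hre : ε ≤ -ξ.re)
    (hξ : ‖exp (-ξ ^ 2 / 2)‖ ≤ 1 - δ) (t : ℝ) :
    ‖log (1 - exp (-ξ ^ 2 / 2) * exp (-(t : ℂ) ^ 2 / 2)) / (I * t - ξ)‖ ≤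
      (δ * ε)⁻¹ * Real.exp (-(1 / 2) * t ^ 2) := by
  set g := Real.exp (-(1 / 2) * t ^ 2)
  have hg1 : g ≤ 1 := Real.exp_le_one_iff.mpr (by nlinarith [sq_nonneg t])
  have hw : ‖exp (-ξ ^ 2 / 2) * exp (-(t : ℂ) ^ 2 / 2)‖ ≤ (1 - δ) * g := by
    rw [norm_mul, norm_exp_neg_sq_div_two]
    exact mul_le_mul_of_nonneg_right hξ (Real.exp_nonneg _)
  have hδ1 : 0 ≤ 1 - δ := (norm_nonneg _).trans hξ
  have hden : ε ≤ ‖I * t - ξ‖ :=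
    calc ε ≤ |(I * t - ξ).re| := by simpa using hre.trans (le_abs_self _)
      _ ≤ ‖I * t - ξ‖ := abs_re_le_norm _
  rw [norm_div, div_le_iff₀ (hε.trans_le hden)]
  calc _ ≤ ‖exp (-ξ ^ 2 / 2) * exp (-(t : ℂ) ^ 2 / 2)‖ / δ :=
        norm_log_one_sub_le hδ (hw.trans (by nlinarith [Real.exp_pos (-(1 / 2) * t ^ 2)]))
    _ ≤ g / δ := by gcongr; nlinarith [Real.exp_pos (-(1 / 2) * t ^ 2)]
    _ = (δ * ε)⁻¹ * g * ε := by field_simp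
    _ ≤ (δ * ε)⁻¹ * g * ‖I * t - ξ‖ := by gcongr

lemma norm_Qf_le {ξ : ℂ} {δ ε : ℝ} (hδ : 0 < δ) (hε : 0 < ε) (hre : ε ≤ -ξ.re)
    (hξ : ‖exp (-ξ ^ 2 / 2)‖ ≤ 1 - δ) :
    ‖Qf ξ‖ ≤ √(2 * Real.pi) / (Real.pi * δ * ε) := by
  have hgauss : Integrable fun t : ℝ => (δ * ε)⁻¹ * Real.exp (-(1 / 2) * t ^ 2) :=
    (integrable_exp_neg_mul_sq (by norm_num)).const_mul _
  have hint := (norm_integral_le_integral_norm _).trans <| integral_mono_of_nonneg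
    (.of_forall fun t => norm_nonneg _) hgauss
    (.of_forall (norm_Qf_integrand_le hδ hε hre hξ))
  rw [integral_const_mul, integral_gaussian, div_div_eq_mul_div, div_one] at hint
  rw [Qf, norm_mul, norm_neg, norm_div, norm_one, norm_real, Real.norm_of_nonneg Real.pi_pos.le,
    mul_comm 2 Real.pi]
  calc _ ≤ 1 / Real.pi * ((δ * ε)⁻¹ * √(Real.pi * 2)) := by gcongr
    _ = _ := by field_simp

end

lemma uK_sq (z : ℂ) (k : ℤ) :
    uK z k ^ 2 = ((-2 * Real.log ‖z‖ : ℝ) : ℂ) + Complex.I * (thetaK z k : ℂ) := by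
  rw [uK, neg_sq, one_div]
  exact Complex.cpow_ofNat_inv_pow _ 2

lemma re_uK_nonpos (z : ℂ) (k : ℤ) : (uK z k).re ≤ 0 := by
  rw [uK, Complex.neg_re, one_div, Complex.cpow_inv_two_re]
  exact neg_nonpos.2 (Real.sqrt_nonneg _)

lemma abs_abs_thetaK_sub_le (z : ℂ) (k : ℤ) :
    |(|thetaK z k| - 4 * Real.pi * |(k : ℝ)|)| ≤ 2 * Real.pi := by
  have h4π : 4 * Real.pi * |(k : ℝ)| = |4 * Real.pi * k| := by
    rw [abs_mul, abs_of_pos (by positivity : (0 : ℝ) < 4 * Real.pi)]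
  rw [h4π]
  refine (abs_abs_sub_abs_le_abs_sub _ _).trans ?_
  rw [thetaK, add_sub_cancel_right, abs_neg, abs_mul, abs_two]
  linarith [Complex.abs_arg_le_pi z]

lemma re_PhiF_xTau (τ x : ℝ) (u : ℂ) :
    (PhiF τ (xTau x τ) u).re = τ * (-u.re * (3 + u.re ^ 2 - 3 * u.im ^ 2) / 3) +
      Real.pi ^ ((1 : ℝ) / 4) / √2 * x * √τ * u.re - (Qf u).re := by
  simp only [PhiF, xTau, Complex.sub_re, Complex.add_re, Complex.mul_re, Complex.div_re,
    Complex.neg_re, Complex.neg_im, Complex.ofReal_re, Complex.ofReal_im, Complex.div_im,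
    pow_succ, pow_zero, one_mul, Complex.mul_im]
  norm_num
  ring

lemma exists_re_PhiF_uK_le (x τ : ℝ) {δ₁ : ℝ} (hδ₁ : 0 < δ₁) {z : ℂ}
    (hz₀ : 0 < ‖z‖) (hz₁ : ‖z‖ ≤ 1 - δ₁) (k : ℤ) :
    ∃ p q : ℝ, 0 ≤ p ∧ p ^ 2 - q ^ 2 = -2 * Real.log ‖z‖ ∧ 2 * |p * q| = |thetaK z k| ∧
      (PhiF τ (xTau x τ) (uK z k)).re ≤ τ * (p * (3 + p ^ 2 - 3 * q ^ 2) / 3) +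
        |Real.pi ^ ((1 : ℝ) / 4) / √2 * x| * √τ * p + √(2 * Real.pi) / (Real.pi * δ₁ * √δ₁) := by
  set u := uK z k
  have hsq := uK_sq z k
  have hre : u.re ^ 2 - u.im ^ 2 = -2 * Real.log ‖z‖ := by
    simpa [sq, Complex.mul_re] using congrArg Complex.re hsq
  have him : 2 * (u.re * u.im) = thetaK z k := by
    have := congrArg Complex.im hsq
    simp only [sq, Complex.mul_im, Complex.add_im, Complex.ofReal_im, Complex.mul_im,
      Complex.I_re, Complex.I_im, Complex.ofReal_re] at this
    linarith
  refine ⟨-u.re, u.im, neg_nonneg.2 (re_uK_nonpos z k), by simpa using hre, ?_, ?_⟩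
  · rw [← him, neg_mul, abs_neg, abs_mul 2, abs_two]
  have hlog : 2 * δ₁ ≤ -2 * Real.log ‖z‖ := by linarith [Real.log_le_sub_one_of_pos hz₀]
  have hQ : ‖Qf u‖ ≤ √(2 * Real.pi) / (Real.pi * δ₁ * √δ₁) := by
    refine norm_Qf_le hδ₁ (Real.sqrt_pos.2 hδ₁) ?_ ?_
    · refine Real.sqrt_le_iff.2 ⟨neg_nonneg.2 (re_uK_nonpos z k), ?_⟩
      nlinarith [sq_nonneg u.im]
    · have h : (-u ^ 2 / 2).re = Real.log ‖z‖ := by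
        rw [hsq]
        simp
      rwa [Complex.norm_exp, h, Real.exp_log hz₀]
  have hx : Real.pi ^ ((1 : ℝ) / 4) / √2 * x * √τ * u.re ≤
      |Real.pi ^ ((1 : ℝ) / 4) / √2 * x| * √τ * -u.re := by
    have := neg_abs_le (Real.pi ^ ((1 : ℝ) / 4) / √2 * x)
    nlinarith [mul_nonneg (Real.sqrt_nonneg τ) (neg_nonneg.2 (re_uK_nonpos z k))]
  rw [re_PhiF_xTau, neg_sq]
  linarith [neg_le_abs (Qf u).re, Complex.abs_re_le_norm (Qf u)]

lemma central_phase_le {p q : ℝ} (hp : 0 ≤ p) (ha₀ : 0 ≤ p ^ 2 - q ^ 2)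
    (ha₁ : p ^ 2 - q ^ 2 ≤ 1 / 1000000) (hθ : |p * q| ≤ Real.pi) :
    p * (3 + p ^ 2 - 3 * q ^ 2) / 3 ≤ 0.4715 ∧ p ≤ 4.5 := by
  have hπ : Real.pi < 3.141593 := Real.pi_lt_d6
  have hpq : (p * q) ^ 2 ≤ Real.pi ^ 2 := sq_le_sq' (abs_le.mp hθ).1 (abs_le.mp hθ).2
  constructor
  · rcases le_or_gt (3 + p ^ 2 - 3 * q ^ 2) 0 with h | h
    · nlinarith [mul_nonpos_of_nonneg_of_nonpos hp h]
    · -- with `P = p²`, this is `P (3 - 2P)² ≤ 2`, i.e. `(2 - P)(2P - 1)² ≥ 0`, perturbed by `a`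
      set a := p ^ 2 - q ^ 2
      have hsq : (p * (3 + p ^ 2 - 3 * q ^ 2)) ^ 2 ≤ 1.4145 ^ 2 := by
        have hP : p ^ 2 ≤ 3 / 2 + 3 / 2 * a := by nlinarith
        have e : (p * (3 + p ^ 2 - 3 * q ^ 2)) ^ 2 =
            p ^ 2 * (3 - 2 * p ^ 2) ^ 2 + 6 * a * p ^ 2 * (3 - 2 * p ^ 2) + 9 * a ^ 2 * p ^ 2 := by
          ring
        nlinarith [mul_nonneg (show 0 ≤ 2 - p ^ 2 by nlinarith) (sq_nonneg (2 * p ^ 2 - 1)),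
          mul_nonneg ha₀ (sq_nonneg p)]
      nlinarith [mul_nonneg hp h.le]
  · by_contra! h
    have hp2 : 20 ≤ p ^ 2 := by nlinarith
    have hq2 : 19 ≤ q ^ 2 := by linarith
    have hπ2 : Real.pi ^ 2 < 10 := by nlinarith [Real.pi_pos]
    nlinarith [mul_le_mul hp2 hq2 (by norm_num) (by positivity), mul_pow p q 2]

lemma noncentral_phase_polynomial_le {T : ℝ} (hT : 1 ≤ T) :
    9 * T * (1.9366 * T + 0.0019) ^ 2 ≤
      3.141592 * (2 * T - 1) * (2 * (3.141592 * (2 * T - 1)) - 3.000003) ^ 2 := by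
  obtain ⟨s, hs, rfl⟩ : ∃ s, 0 ≤ s ∧ T = s + 1 := ⟨T - 1, by linarith, by ring⟩
  nlinarith [pow_nonneg hs 3, sq_nonneg s]

lemma noncentral_phase_le {p q t : ℝ} (ht : 1 ≤ t) (hp : 0 ≤ p) (ha₀ : 0 ≤ p ^ 2 - q ^ 2)
    (ha₁ : p ^ 2 - q ^ 2 ≤ 1 / 1000000) (hθ₀ : Real.pi * (2 * t ^ 2 - 1) ≤ |p * q|)
    (hθ₁ : |p * q| ≤ Real.pi * (2 * t ^ 2 + 1)) :
    p * (3 + p ^ 2 - 3 * q ^ 2) / 3 ≤ -(1.9366 * t ^ 2 + 0.0019) * t ∧ p ≤ 4.5 * t := by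
  have hπ₀ : 3.141592 < Real.pi := Real.pi_gt_d6
  have hπ₁ : Real.pi < 3.141593 := Real.pi_lt_d6
  have ht2 : 1 ≤ t ^ 2 := by nlinarith
  generalize ha : p ^ 2 - q ^ 2 = a at ha₀ ha₁
  have hq : q ^ 2 = p ^ 2 - a := by linarith
  have hpq : |p * q| ^ 2 = p ^ 2 * (p ^ 2 - a) := by rw [sq_abs, mul_pow, hq]
  have hpq_le : |p * q| ≤ p ^ 2 := by nlinarith [abs_nonneg (p * q)]
  rw [hq]
  constructor
  · have hB : 3.141592 * (2 * t ^ 2 - 1) ≤ p ^ 2 := by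
      nlinarith [mul_le_mul_of_nonneg_right hπ₀.le (show 0 ≤ 2 * t ^ 2 - 1 by linarith)]
    have hD : 2 * (3.141592 * (2 * t ^ 2 - 1)) - 3.000003 ≤ 2 * p ^ 2 - 3 - 3 * a := by linarith
    have hsq : (3 * (1.9366 * t ^ 2 + 0.0019) * t) ^ 2 ≤ (p * (2 * p ^ 2 - 3 - 3 * a)) ^ 2 :=
      calc (3 * (1.9366 * t ^ 2 + 0.0019) * t) ^ 2 = 9 * t ^ 2 * (1.9366 * t ^ 2 + 0.0019) ^ 2 := by
            ring
        _ ≤ 3.141592 * (2 * t ^ 2 - 1) * (2 * (3.141592 * (2 * t ^ 2 - 1)) - 3.000003) ^ 2 :=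
            noncentral_phase_polynomial_le ht2
        _ ≤ p ^ 2 * (2 * p ^ 2 - 3 - 3 * a) ^ 2 :=
            mul_le_mul hB (pow_le_pow_left₀ (by nlinarith) hD 2) (sq_nonneg _) (sq_nonneg _)
        _ = (p * (2 * p ^ 2 - 3 - 3 * a)) ^ 2 := by ring
    have hX := (sq_le_sq₀ (by positivity) (mul_nonneg hp (by nlinarith))).1 hsq
    nlinarith
  · by_contra! h
    have hp2 : 20 * t ^ 2 ≤ p ^ 2 := by nlinarith
    have hq2 : 19 * t ^ 2 ≤ p ^ 2 - a := by linarith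
    have hpq10 : |p * q| ≤ 10 * t ^ 2 := by nlinarith
    nlinarith [mul_le_mul hp2 hq2 (by positivity) (by positivity), abs_nonneg (p * q)]

lemma exists_mul_sqrt_add_le (A C : ℝ) {ε : ℝ} (hε : 0 < ε) :
    ∃ τ₀ > 0, ∀ τ, τ₀ ≤ τ → A * √τ + C ≤ ε * τ := by
  refine ⟨max 1 (((|A| + |C|) / ε) ^ 2), by positivity, fun τ hτ => ?_⟩
  have h1 : 1 ≤ √τ := Real.one_le_sqrt.2 (le_of_max_le_left hτ)
  have h2 : (|A| + |C|) / ε ≤ √τ := Real.le_sqrt_of_sq_le (le_of_max_le_right hτ)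
  rw [div_le_iff₀ hε] at h2
  calc A * √τ + C ≤ (|A| + |C|) * √τ := by
        nlinarith [le_abs_self A, le_abs_self C, abs_nonneg C]
    _ ≤ ε * √τ * √τ := by nlinarith
    _ = ε * τ := by rw [mul_assoc, Real.mul_self_sqrt (by linarith [le_of_max_le_left hτ])]

lemma neg_two_mul_log_le {r : ℝ} (hr : 1 - 1 / 10000000 ≤ r) : -2 * Real.log r ≤ 1 / 1000000 := by
  have hlog := Real.one_sub_inv_le_log_of_pos (by linarith : 0 < r)
  have hinv : r⁻¹ ≤ (1 - 1 / 10000000)⁻¹ := inv_anti₀ (by norm_num) hr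
  norm_num at hinv
  linarith

lemma rpow_three_halves_eq {a : ℝ} (ha : 0 ≤ a) : a ^ ((3 : ℝ) / 2) = √a ^ 2 * √a := by
  rw [Real.sqrt_eq_rpow, ← Real.rpow_natCast, ← Real.rpow_mul ha, ← Real.rpow_add' ha (by norm_num)]
  norm_num

lemma le_of_phase_le {Φ τ g G p t K C ε : ℝ} (hτ : 0 ≤ τ) (ht : 1 ≤ t) (hK : 0 ≤ K)
    (hC : 0 ≤ C) (hΦ : Φ ≤ τ * g + K * √τ * p + C) (hg : g ≤ G) (hp : p ≤ 4.5 * t)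
    (hτε : 4.5 * K * √τ + C ≤ ε * τ) : Φ ≤ τ * G + ε * τ * t := by
  have hKτ : 0 ≤ K * √τ := mul_nonneg hK (Real.sqrt_nonneg τ)
  nlinarith [mul_le_mul_of_nonneg_left hg hτ, mul_le_mul_of_nonneg_left hp hKτ,
    mul_le_mul_of_nonneg_left ht hC, mul_le_mul_of_nonneg_right hτε (by linarith : (0 : ℝ) ≤ t)]

theorem statement11 (x : ℝ) :
    ∃ δ ∈ Set.Ioo (0 : ℝ) 1, ∀ δ₁ ∈ Set.Ioo (0 : ℝ) δ, ∃ τ₀ > (0 : ℝ),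
      ∀ τ : ℝ, τ₀ ≤ τ → ∀ z : ℂ, 1 - δ ≤ ‖z‖ → ‖z‖ ≤ 1 - δ₁ →
        (PhiF τ (xTau x τ) (uK z 0)).re ≤ 0.4734 * τ ∧
        ∀ k : ℤ, k ≠ 0 →
          (PhiF τ (xTau x τ) (uK z k)).re ≤ -1.9366 * |(k : ℝ)| ^ ((3 : ℝ) / 2) * τ := by
  refine ⟨1 / 10000000, by norm_num, fun δ₁ hδ₁ => ?_⟩
  have hC : 0 ≤ √(2 * Real.pi) / (Real.pi * δ₁ * √δ₁) := by have := hδ₁.1; positivity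
  obtain ⟨τ₀, hτ₀, hτ₀_le⟩ := exists_mul_sqrt_add_le
    (4.5 * |Real.pi ^ ((1 : ℝ) / 4) / √2 * x|) (√(2 * Real.pi) / (Real.pi * δ₁ * √δ₁))
    (ε := 0.0019) (by norm_num)
  refine ⟨τ₀, hτ₀, fun τ hτ z hz₀ hz₁ => ?_⟩
  have hτ0 : 0 ≤ τ := by linarith
  have hz : 0 < ‖z‖ := by linarith
  have ha₀ : 0 ≤ -2 * Real.log ‖z‖ := by nlinarith [Real.log_nonpos hz.le (by linarith [hδ₁.1])]
  have ha₁ := neg_two_mul_log_le hz₀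
  refine ⟨?_, fun k hk => ?_⟩
  · obtain ⟨p, q, hp, hpq, hθ, hΦ⟩ := exists_re_PhiF_uK_le x τ hδ₁.1 hz hz₁ 0
    have hθ₀ := abs_le.1 (abs_abs_thetaK_sub_le z 0)
    obtain ⟨hg, hp₁⟩ := central_phase_le hp (hpq ▸ ha₀) (hpq ▸ ha₁) (by simp at hθ₀; linarith)
    have := le_of_phase_le hτ0 le_rfl (abs_nonneg _) hC hΦ hg (by linarith) (hτ₀_le τ hτ)
    linarith
  · obtain ⟨p, q, hp, hpq, hθ, hΦ⟩ := exists_re_PhiF_uK_le x τ hδ₁.1 hz hz₁ k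
    have hθk := abs_le.1 (abs_abs_thetaK_sub_le z k)
    have hk1 : (1 : ℝ) ≤ |(k : ℝ)| := by exact_mod_cast Int.one_le_abs hk
    have ht2 : √|(k : ℝ)| ^ 2 = |(k : ℝ)| := Real.sq_sqrt (abs_nonneg _)
    obtain ⟨hg, hp₁⟩ := noncentral_phase_le (Real.one_le_sqrt.2 hk1) hp (hpq ▸ ha₀) (hpq ▸ ha₁)
      (by rw [ht2]; linarith) (by rw [ht2]; linarith)
    have := le_of_phase_le hτ0 (Real.one_le_sqrt.2 hk1) (abs_nonneg _) hC hΦ hg hp₁ (hτ₀_le τ hτ)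
    rw [rpow_three_halves_eq (abs_nonneg _)]
    linarith
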